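/- Sokhotski–Plemelj jump formula on an interval: let g : [a,b] → ℝ be Hölder continuous and define Φ(ζ) = (1/(2πi)) ∫_a^b g(ξ)/(ξ−ζ) dξ for ζ ∈ ℂ ∖ [a,b]. Then for x in the open interval (a,b), the one-sided limits satisfy Φ(x+i0) − Φ(x−i0) = g(x). -/

import Mathlib

/-!
Split the density as `g ξ = (g ξ - g x) + g x`. The constant part integrates to
`g x * (log (b - ζ) - log (a - ζ))`, and as `ζ → x ± i0` the branch of `log (a - ζ)` tends to
`log (x - a) ∓ πi`: this branch jump is the whole jump `g x`. The remaining integral has no jump: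
along a vertical approach `|ξ - ζ| ≥ |ξ - x|`, so Hölder continuity dominates its integrand by
the integrable `C |ξ - x| ^ (α - 1)`.
-/

open Complex MeasureTheory Filter Set Topology
open scoped Real

theorem continuousOn_of_abs_sub_le_mul_rpow {s : Set ℝ} {g : ℝ → ℝ} {C α : ℝ} (hα : 0 < α)
    (hg : ∀ y ∈ s, ∀ z ∈ s, |g y - g z| ≤ C * |y - z| ^ α) : ContinuousOn g s := by
  intro t ht
  rw [ContinuousWithinAt, tendsto_iff_norm_sub_tendsto_zero]
  have hbound : Tendsto (fun y => C * |y - t| ^ α) (𝓝[s] t) (𝓝 0) := by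
    have : Continuous fun y : ℝ => C * |y - t| ^ α := by fun_prop (disch := positivity)
    simpa [Real.zero_rpow hα.ne'] using (this.tendsto t).mono_left nhdsWithin_le_nhds
  exact squeeze_zero' (Eventually.of_forall fun _ => norm_nonneg _)
    (eventually_nhdsWithin_of_forall fun y hy => hg y hy t ht) hbound

theorem intervalIntegrable_abs_rpow {r : ℝ} (hr : -1 < r) (a b : ℝ) :
    IntervalIntegrable (fun t : ℝ => |t| ^ r) volume a b := by
  simpa [Complex.norm_cpow_real] using
    (intervalIntegral.intervalIntegrable_cpow' (a := a) (b := b) (r := r) (by simpa)).norm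

theorem integral_inv_ofReal_sub {ζ : ℂ} (hζ : ζ.im ≠ 0) (a b : ℝ) :
    ∫ ξ in a..b, ((ξ : ℂ) - ζ)⁻¹ = log (b - ζ) - log (a - ζ) := by
  have hmem : ∀ t : ℝ, (t : ℂ) - ζ ∈ slitPlane := fun t => Or.inr (by simpa using hζ)
  refine intervalIntegral.integral_eq_sub_of_hasDerivAt (f := fun t : ℝ => log ((t : ℂ) - ζ))
    (fun t _ => ?_) ?_
  · simpa using ((hasDerivAt_id t).ofReal_comp.sub_const ζ).clog_real (hmem t)
  · exact (ContinuousOn.inv₀ (by fun_prop) fun t _ => slitPlane_ne_zero (hmem t)).intervalIntegrable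

theorem integral_div_ofReal_sub_eq {a b : ℝ} {g : ℝ → ℝ} (hg : ContinuousOn g (uIcc a b))
    {ζ : ℂ} (hζ : ζ.im ≠ 0) (x : ℝ) :
    ∫ ξ in a..b, (g ξ : ℂ) / ((ξ : ℂ) - ζ) =
      (∫ ξ in a..b, ((g ξ : ℂ) - g x) / ((ξ : ℂ) - ζ)) + g x * (log (b - ζ) - log (a - ζ)) := by
  have hne : ∀ ξ : ℝ, (ξ : ℂ) - ζ ≠ 0 := fun ξ h => hζ (by simpa using congrArg im h)
  have hinv : IntervalIntegrable (fun ξ : ℝ => ((ξ : ℂ) - ζ)⁻¹) volume a b :=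
    (ContinuousOn.inv₀ (by fun_prop) fun ξ _ => hne ξ).intervalIntegrable
  have hsub : IntervalIntegrable (fun ξ => ((g ξ : ℂ) - g x) / ((ξ : ℂ) - ζ)) volume a b :=
    ((continuous_ofReal.comp_continuousOn hg).sub continuousOn_const).div (by fun_prop)
      (fun ξ _ => hne ξ) |>.intervalIntegrable
  rw [← integral_inv_ofReal_sub hζ, ← intervalIntegral.integral_const_mul,
    ← intervalIntegral.integral_add hsub (hinv.const_mul _)]
  refine intervalIntegral.integral_congr fun ξ _ => ?_
  simp only [div_eq_mul_inv]
  ring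

theorem tendsto_integral_sub_div_ofReal_sub {a b x C α : ℝ} {g : ℝ → ℝ}
    (hg : ContinuousOn g (uIcc a b)) (hα : 0 < α)
    (hHolder : ∀ ξ ∈ uIcc a b, |g ξ - g x| ≤ C * |ξ - x| ^ α) :
    Tendsto (fun ζ : ℂ => ∫ ξ in a..b, ((g ξ : ℂ) - g x) / ((ξ : ℂ) - ζ))
      (𝓝[{ζ | ζ.re = x ∧ ζ.im ≠ 0}] (x : ℂ))
      (𝓝 (∫ ξ in a..b, ((g ξ : ℂ) - g x) / ((ξ : ℂ) - x))) := by
  refine intervalIntegral.tendsto_integral_filter_of_dominated_convergence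
    (fun ξ => C * |ξ - x| ^ (α - 1)) ?_ ?_ ?_ ?_
  · filter_upwards [self_mem_nhdsWithin] with ζ hζ
    have hne : ∀ ξ : ℝ, (ξ : ℂ) - ζ ≠ 0 := fun ξ h => hζ.2 (by simpa using congrArg im h)
    refine ContinuousOn.aestronglyMeasurable ?_ measurableSet_uIoc
    exact ((continuous_ofReal.comp_continuousOn hg).sub continuousOn_const).div (by fun_prop)
      (fun ξ _ => hne ξ) |>.mono uIoc_subset_uIcc
  · filter_upwards [self_mem_nhdsWithin] with ζ hζ
    filter_upwards [Measure.ae_ne volume x] with ξ hξx hξ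
    have hpos : 0 < |ξ - x| := abs_pos.2 (sub_ne_zero.2 hξx)
    have hden : |ξ - x| ≤ ‖(ξ : ℂ) - ζ‖ := by
      simpa [hζ.1] using abs_re_le_norm ((ξ : ℂ) - ζ)
    have hnum := hHolder ξ (uIoc_subset_uIcc hξ)
    rw [norm_div, ← ofReal_sub, norm_real, Real.norm_eq_abs, Real.rpow_sub hpos, Real.rpow_one,
      ← mul_div_assoc]
    exact div_le_div₀ ((abs_nonneg _).trans hnum) hnum hpos hden
  · simpa using ((intervalIntegrable_abs_rpow (by linarith) (a - x) (b - x)).comp_sub_right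
      x).const_mul C
  · filter_upwards [Measure.ae_ne volume x] with ξ hξx _
    have hne : (ξ : ℂ) - x ≠ 0 := sub_ne_zero.2 (ofReal_injective.ne hξx)
    exact (tendsto_const_nhds.div (tendsto_const_nhds.sub tendsto_id) hne).mono_left
      nhdsWithin_le_nhds

theorem tendsto_log_ofReal_sub_of_im_pos {a x : ℝ} (h : a < x) :
    Tendsto (fun ζ : ℂ => log (a - ζ)) (𝓝[{ζ | 0 < ζ.im}] (x : ℂ))
      (𝓝 (Real.log (x - a) - π * I)) := by
  have hlog := tendsto_log_nhdsWithin_im_neg_of_re_neg_of_im_zero (z := a - x)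
    (by simpa using h) (by simp)
  rw [← ofReal_sub, norm_real, Real.norm_of_nonpos (by linarith), neg_sub] at hlog
  refine hlog.comp (tendsto_nhdsWithin_iff.2 ⟨?_, eventually_nhdsWithin_of_forall fun ζ hζ => ?_⟩)
  · exact ((continuous_sub_left (a : ℂ)).tendsto' _ _ (ofReal_sub a x).symm).mono_left
      nhdsWithin_le_nhds
  · simpa using hζ

theorem tendsto_log_ofReal_sub_of_im_neg {a x : ℝ} (h : a < x) :
    Tendsto (fun ζ : ℂ => log (a - ζ)) (𝓝[{ζ | ζ.im < 0}] (x : ℂ))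
      (𝓝 (Real.log (x - a) + π * I)) := by
  have hlog := tendsto_log_nhdsWithin_im_nonneg_of_re_neg_of_im_zero (z := a - x)
    (by simpa using h) (by simp)
  rw [← ofReal_sub, norm_real, Real.norm_of_nonpos (by linarith), neg_sub] at hlog
  refine hlog.comp (tendsto_nhdsWithin_iff.2 ⟨?_, eventually_nhdsWithin_of_forall fun ζ hζ => ?_⟩)
  · exact ((continuous_sub_left (a : ℂ)).tendsto' _ _ (ofReal_sub a x).symm).mono_left
      nhdsWithin_le_nhds
  · simpa using hζ.le

theorem tendsto_ofReal_add_I_mul_nhdsGT (x : ℝ) :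
    Tendsto (fun ε : ℝ => (x : ℂ) + I * ε) (𝓝[>] 0) (𝓝[{ζ | ζ.re = x ∧ 0 < ζ.im}] (x : ℂ)) := by
  refine tendsto_nhdsWithin_iff.2 ⟨?_, eventually_nhdsWithin_of_forall fun ε hε => ?_⟩
  · have : Continuous fun ε : ℝ => (x : ℂ) + I * ε := by fun_prop
    simpa using (this.tendsto 0).mono_left nhdsWithin_le_nhds
  · simpa using hε

theorem tendsto_ofReal_sub_I_mul_nhdsGT (x : ℝ) :
    Tendsto (fun ε : ℝ => (x : ℂ) - I * ε) (𝓝[>] 0) (𝓝[{ζ | ζ.re = x ∧ ζ.im < 0}] (x : ℂ)) := by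
  refine tendsto_nhdsWithin_iff.2 ⟨?_, eventually_nhdsWithin_of_forall fun ε hε => ?_⟩
  · have : Continuous fun ε : ℝ => (x : ℂ) - I * ε := by fun_prop
    simpa using (this.tendsto 0).mono_left nhdsWithin_le_nhds
  · simpa using hε

noncomputable def cauchyIntegral (a b : ℝ) (g : ℝ → ℝ) (ζ : ℂ) : ℂ :=
  (1 / (2 * π * I)) * ∫ ξ in a..b, (g ξ : ℂ) / ((ξ : ℂ) - ζ)

theorem tendsto_cauchyIntegral {a b x C α : ℝ} {g : ℝ → ℝ} (hx : x ∈ Ioo a b) (hα : 0 < α)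
    (hHolder : ∀ y ∈ Icc a b, ∀ z ∈ Icc a b, |g y - g z| ≤ C * |y - z| ^ α)
    {l : Filter ℂ} (hl : l ≤ 𝓝[{ζ | ζ.re = x ∧ ζ.im ≠ 0}] (x : ℂ)) {w : ℂ}
    (hw : Tendsto (fun ζ => log (a - ζ)) l (𝓝 w)) :
    Tendsto (cauchyIntegral a b g) l (𝓝 ((1 / (2 * π * I)) *
      ((∫ ξ in a..b, ((g ξ : ℂ) - g x) / ((ξ : ℂ) - x)) + g x * (log (b - x) - w)))) := by
  have hIcc : uIcc a b = Icc a b := uIcc_of_le (hx.1.trans hx.2).le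
  have hg : ContinuousOn g (uIcc a b) := hIcc ▸ continuousOn_of_abs_sub_le_mul_rpow hα hHolder
  have hsplit : ∀ᶠ ζ in l, (1 / (2 * π * I)) * ((∫ ξ in a..b, ((g ξ : ℂ) - g x) / ((ξ : ℂ) - ζ)) +
      g x * (log (b - ζ) - log (a - ζ))) = cauchyIntegral a b g ζ :=
    hl <| eventually_nhdsWithin_of_forall fun ζ hζ => by
      rw [cauchyIntegral, integral_div_ofReal_sub_eq hg hζ.2 x]
  have hreg := (tendsto_integral_sub_div_ofReal_sub hg hα fun ξ hξ =>
    hHolder ξ (hIcc ▸ hξ) x (Ioo_subset_Icc_self hx)).mono_left hl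
  have hlog_b : Tendsto (fun ζ => log (b - ζ)) l (𝓝 (log (b - x))) :=
    ((tendsto_const_nhds.sub tendsto_id).mono_left (hl.trans nhdsWithin_le_nhds)).clog
      (Or.inl (by simpa using hx.2))
  exact ((hreg.add ((hlog_b.sub hw).const_mul _)).const_mul _).congr' hsplit

theorem stmt_12_general (a b : ℝ) (g : ℝ → ℝ)
    (C α : ℝ) (hα0 : 0 < α)
    (hHolder : ∀ x ∈ Set.Icc a b, ∀ y ∈ Set.Icc a b, |g x - g y| ≤ C * |x - y| ^ α)
    (Φ : ℂ → ℂ)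
    (hΦ : ∀ ζ : ℂ, ζ ∉ Complex.ofReal '' Set.Icc a b →
      Φ ζ = (1 / (2 * Real.pi * Complex.I)) * ∫ ξ in a..b, (g ξ : ℂ) / ((ξ : ℂ) - ζ)) :
    ∀ x ∈ Set.Ioo a b,
      ∃ Φp Φm : ℂ,
        Tendsto (fun ε : ℝ => Φ ((x : ℂ) + Complex.I * ε)) (nhdsWithin 0 (Set.Ioi 0)) (nhds Φp) ∧
        Tendsto (fun ε : ℝ => Φ ((x : ℂ) - Complex.I * ε)) (nhdsWithin 0 (Set.Ioi 0)) (nhds Φm) ∧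
        Φp - Φm = (g x : ℂ) := by
  intro x hx
  have hΦ_eq : cauchyIntegral a b g =ᶠ[𝓝[{ζ : ℂ | ζ.im ≠ 0}] (x : ℂ)] Φ :=
    eventually_nhdsWithin_of_forall fun ζ hζ =>
      (hΦ ζ fun ⟨t, _, ht⟩ => hζ (ht ▸ ofReal_im t)).symm
  have hupper := tendsto_cauchyIntegral hx hα0 hHolder (l := 𝓝[{ζ | ζ.re = x ∧ 0 < ζ.im}] (x : ℂ))
    (nhdsWithin_mono _ fun ζ hζ => ⟨hζ.1, hζ.2.ne'⟩)
    ((tendsto_log_ofReal_sub_of_im_pos hx.1).mono_left (nhdsWithin_mono _ fun ζ hζ => hζ.2))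
  have hlower := tendsto_cauchyIntegral hx hα0 hHolder (l := 𝓝[{ζ | ζ.re = x ∧ ζ.im < 0}] (x : ℂ))
    (nhdsWithin_mono _ fun ζ hζ => ⟨hζ.1, hζ.2.ne⟩)
    ((tendsto_log_ofReal_sub_of_im_neg hx.1).mono_left (nhdsWithin_mono _ fun ζ hζ => hζ.2))
  refine ⟨_, _,
    (hupper.congr' (hΦ_eq.filter_mono (nhdsWithin_mono _ fun ζ hζ => hζ.2.ne'))).comp
      (tendsto_ofReal_add_I_mul_nhdsGT x),
    (hlower.congr' (hΦ_eq.filter_mono (nhdsWithin_mono _ fun ζ hζ => hζ.2.ne))).comp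
      (tendsto_ofReal_sub_I_mul_nhdsGT x), ?_⟩
  field_simp
  ring

/-- Sokhotski–Plemelj jump formula on an interval. -/
theorem stmt_12 (a b : ℝ) (hab : a < b) (g : ℝ → ℝ)
    (C α : ℝ) (hα0 : 0 < α) (hα1 : α ≤ 1)
    (hHolder : ∀ x ∈ Set.Icc a b, ∀ y ∈ Set.Icc a b, |g x - g y| ≤ C * |x - y| ^ α)
    (Φ : ℂ → ℂ)
    (hΦ : ∀ ζ : ℂ, ζ ∉ Complex.ofReal '' Set.Icc a b →
      Φ ζ = (1 / (2 * Real.pi * Complex.I)) * ∫ ξ in a..b, (g ξ : ℂ) / ((ξ : ℂ) - ζ)) :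
    ∀ x ∈ Set.Ioo a b,
      ∃ Φp Φm : ℂ,
        Tendsto (fun ε : ℝ => Φ ((x : ℂ) + Complex.I * ε)) (nhdsWithin 0 (Set.Ioi 0)) (nhds Φp) ∧
        Tendsto (fun ε : ℝ => Φ ((x : ℂ) - Complex.I * ε)) (nhdsWithin 0 (Set.Ioi 0)) (nhds Φm) ∧
        Φp - Φm = (g x : ℂ) :=
  stmt_12_general a b g C α hα0 hHolder Φ hΦ
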